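/- Let φ^μ be an irreducible unitary matrix representation of S(n) with m_μ ≠ 0 on (ℂ^d)^{⊗n}, in PRIR form relative to S(n) ⊃ S(n−1), with basis indices written (β, i_β) where β runs over the irreps of S(n−1) occurring in the (multiplicity-free) restriction of μ. Then the partial trace over the last tensor factor satisfies tr_n E^μ_{(β,i_β),(β',j_{β'})} = δ_{ββ'}·(m_μ/m_β)·E^β_{i_β j_β}, where E^β is constructed on (ℂ^d)^{⊗(n−1)} from the fixed matrix irrep φ^β of S(n−1). -/

import Mathlib

open scoped BigOperators
open scoped Classical
open scoped ComplexOrder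
open Matrix

noncomputable section

/-- Square matrices on the computational basis of `(ℂ^d)^{⊗ n}`. -/
abbrev Mat (d n : ℕ) := Matrix (Fin n → Fin d) (Fin n → Fin d) ℂ

/-- The unitary permuting the tensor factors according to `σ`. -/
def Vperm (d n : ℕ) (σ : Equiv.Perm (Fin n)) : Mat d n :=
  Matrix.of fun f g => if f ∘ σ = g then (1 : ℂ) else 0

/-- Orthogonal projector onto the maximally entangled state of factors `r` and `s`,
tensored with the identity on the remaining factors. -/
def Pplus (d n : ℕ) (r s : Fin n) : Mat d n :=
  Matrix.of fun f g =>
    if f r = f s ∧ g r = g s ∧ ∀ t : Fin n, t ≠ r → t ≠ s → f t = g t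
    then (1 : ℂ) / d else 0

/-- `V^{(k)} = d^k · P⁺_{n-2k+1,n} ⋯ P⁺_{n-k,n-k+1}` on `n = a + 2k` factors
(`a = n - 2k`), tensored with the identity on the remaining factors. -/
def Vk (d a k : ℕ) : Mat d (a + k + k) :=
  ((d : ℂ) ^ k) •
    ((List.finRange k).map fun j : Fin k =>
      Pplus d (a + k + k) ⟨a + (j : ℕ), by have := j.isLt; omega⟩
        ⟨a + k + k - 1 - (j : ℕ), by have := j.isLt; omega⟩).prod

/-- Extension of an operator on the first `m` factors by the identity on the rest. -/
def extOp {d m n : ℕ} (h : m ≤ n) (X : Mat d m) : Mat d n :=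
  Matrix.of fun f g =>
    if ∀ i : Fin n, m ≤ (i : ℕ) → f i = g i
    then X (fun i => f (Fin.castLE h i)) (fun i => g (Fin.castLE h i)) else 0

def splice {d a b : ℕ} (f : Fin a → Fin d) (t : Fin b → Fin d) : Fin (a + b) → Fin d :=
  fun i => if h : (i : ℕ) < a then f ⟨i, h⟩ else t ⟨(i : ℕ) - a, by have := i.isLt; omega⟩

/-- Partial trace over the last `b` tensor factors. -/
def ptraceLast {d : ℕ} (a b : ℕ) (X : Mat d (a + b)) : Mat d a :=
  Matrix.of fun f g => ∑ t : Fin b → Fin d, X (splice f t) (splice g t)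

def finLtEquiv {m n : ℕ} (h : m ≤ n) : Fin m ≃ {i : Fin n // (i : ℕ) < m} where
  toFun i := ⟨⟨(i : ℕ), lt_of_lt_of_le i.isLt h⟩, i.isLt⟩
  invFun j := ⟨(j.1 : ℕ), j.2⟩
  left_inv i := rfl
  right_inv j := rfl

/-- The embedding of `S(m)` into `S(n)`, acting on the first `m` letters. -/
def permExt {m n : ℕ} (h : m ≤ n) (σ : Equiv.Perm (Fin m)) : Equiv.Perm (Fin n) :=
  σ.extendDomain (finLtEquiv h)

/-- A unitary irreducible matrix representation (Schur's criterion). -/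
def IsUnitaryIrrep {G : Type*} [Group G] {e : ℕ}
    (φ : G →* Matrix (Fin e) (Fin e) ℂ) : Prop :=
  (∀ g, (φ g)ᴴ * φ g = 1) ∧
  ∀ X : Matrix (Fin e) (Fin e) ℂ, (∀ g, X * φ g = φ g * X) →
    ∃ c : ℂ, X = c • (1 : Matrix (Fin e) (Fin e) ℂ)

/-- Operator basis `E^μ_{ij} = (d_μ/m!) Σ_τ φ^μ_{ji}(τ⁻¹) V_τ` on the first `m` factors. -/
def Eop (d m : ℕ) {e : ℕ} (φ : Equiv.Perm (Fin m) →* Matrix (Fin e) (Fin e) ℂ)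
    (i j : Fin e) : Mat d m :=
  ((e : ℂ) / (Nat.factorial m : ℂ)) •
    ∑ τ : Equiv.Perm (Fin m), φ τ⁻¹ j i • Vperm d m τ

/-- Young projector `P_μ = Σ_i E^μ_{ii}`. -/
def Pop (d m : ℕ) {e : ℕ} (φ : Equiv.Perm (Fin m) →* Matrix (Fin e) (Fin e) ℂ) : Mat d m :=
  ∑ i : Fin e, Eop d m φ i i

/-- Schur–Weyl multiplicity `m_μ = tr(P_μ)/d_μ` (a real number). -/
def multSW (d m : ℕ) {e : ℕ} (φ : Equiv.Perm (Fin m) →* Matrix (Fin e) (Fin e) ℂ) : ℝ :=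
  (Matrix.trace (Pop d m φ)).re / (e : ℝ)

/-- A family of concrete unitary irreducible matrix representations of `S(a)`. -/
structure IrrepFamily (a : ℕ) where
  Label : Type
  [instFintype : Fintype Label]
  [instDecEq : DecidableEq Label]
  dim : Label → ℕ
  dim_pos : ∀ ℓ, 0 < dim ℓ
  rep : ∀ ℓ, Equiv.Perm (Fin a) →* Matrix (Fin (dim ℓ)) (Fin (dim ℓ)) ℂ
  irrep : ∀ ℓ, IsUnitaryIrrep (rep ℓ)

attribute [instance] IrrepFamily.instFintype IrrepFamily.instDecEq

/-- An irreducible unitary representation of `S(a+k)` in PRIR form relative to the chain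
`S(a+k) ⊃ ⋯ ⊃ S(a)`: the restriction to `S(a)` is block diagonal, the blocks being
indexed by branching paths, the block of every path ending at the irrep `α` of `S(a)`
being one and the same fixed matrix irrep `Φ.rep α`. -/
structure PRIRData (a k : ℕ) (Φ : IrrepFamily a) (e : ℕ) where
  rep : Equiv.Perm (Fin (a + k)) →* Matrix (Fin e) (Fin e) ℂ
  irrep : IsUnitaryIrrep rep
  Path : Type
  [instFintypePath : Fintype Path]
  [instDecEqPath : DecidableEq Path]
  endOf : Path → Φ.Label
  basis : ((r : Path) × Fin (Φ.dim (endOf r))) ≃ Fin e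
  block_diag : ∀ (h : Equiv.Perm (Fin a)) (r : Path) (l l' : Fin (Φ.dim (endOf r))),
      rep (permExt (Nat.le_add_right a k) h) (basis ⟨r, l⟩) (basis ⟨r, l'⟩)
        = Φ.rep (endOf r) h l l'
  block_off : ∀ (h : Equiv.Perm (Fin a)) (r r' : Path), r ≠ r' →
      ∀ (l : Fin (Φ.dim (endOf r))) (l' : Fin (Φ.dim (endOf r'))),
      rep (permExt (Nat.le_add_right a k) h) (basis ⟨r, l⟩) (basis ⟨r', l'⟩) = 0

attribute [instance] PRIRData.instFintypePath PRIRData.instDecEqPath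

/-- The number of paths `m_{μ/α}`, i.e. the multiplicity of `α` in the restriction. -/
def PRIRData.pathMult {a k : ℕ} {Φ : IrrepFamily a} {e : ℕ}
    (P : PRIRData a k Φ e) (α : Φ.Label) : ℕ :=
  Fintype.card {r : P.Path // P.endOf r = α}

/-- The basis operators
`F^{r_{μ/α} r_{ν/α}}_{i_μ j_ν} = (m_α/√(m_μ m_ν)) E^μ_{i_μ,(r,1_α)} V^{(k)} E^ν_{(s,1_α),j_ν}`. -/
def Fop (d a k : ℕ) (Φ : IrrepFamily a) {e e' : ℕ}
    (P : PRIRData a k Φ e) (Q : PRIRData a k Φ e')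
    (r : P.Path) (s : Q.Path) (i : Fin e) (j : Fin e') : Mat d (a + k + k) :=
  ((multSW d a (Φ.rep (P.endOf r)) /
      Real.sqrt (multSW d (a + k) P.rep * multSW d (a + k) Q.rep) : ℝ) : ℂ) •
    (extOp (Nat.le_add_right (a + k) k)
        (Eop d (a + k) P.rep i (P.basis ⟨r, ⟨0, Φ.dim_pos _⟩⟩)) *
      Vk d a k *
      extOp (Nat.le_add_right (a + k) k)
        (Eop d (a + k) Q.rep (Q.basis ⟨s, ⟨0, Φ.dim_pos _⟩⟩) j))

/-- The projectors `F_μ(α) = Σ_{r_{μ/α}} Σ_{k_μ} F^{r r}_{k k}`. -/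
def Fproj (d a k : ℕ) (Φ : IrrepFamily a) {e : ℕ}
    (P : PRIRData a k Φ e) (α : Φ.Label) : Mat d (a + k + k) :=
  ∑ r : {r : P.Path // P.endOf r = α}, ∑ i : Fin e, Fop d a k Φ P P r.1 r.1 i i

/-- Eigenvalues `λ_μ(α) = (k!·C(N,k)/d^N)·(m_μ d_α)/(m_α d_μ)` of the MPBT operator. -/
def lambdaEig (d a k : ℕ) (Φ : IrrepFamily a) {e : ℕ}
    (P : PRIRData a k Φ e) (α : Φ.Label) : ℝ :=
  ((Nat.factorial k * Nat.choose (a + k) k : ℝ) / (d : ℝ) ^ (a + k)) *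
    (multSW d (a + k) P.rep * (Φ.dim α : ℝ)) / (multSW d a (Φ.rep α) * (e : ℝ))

/-- A family of irreps of `S(a+k)` in PRIR form relative to `Φ`, one chosen
representative for each isomorphism class (pairwise non-isomorphic and complete). -/
structure PRIRFamily (a k : ℕ) (Φ : IrrepFamily a) where
  Label : Type
  [instFintype : Fintype Label]
  [instDecEq : DecidableEq Label]
  dim : Label → ℕ
  prir : ∀ ℓ, PRIRData a k Φ (dim ℓ)
  noniso : ∀ ℓ ℓ', ℓ ≠ ℓ' → ∀ T : Matrix (Fin (dim ℓ)) (Fin (dim ℓ')) ℂ,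
      (∀ σ, (prir ℓ).rep σ * T = T * (prir ℓ').rep σ) → T = 0
  complete : ∀ (e : ℕ) (ψ : Equiv.Perm (Fin (a + k)) →* Matrix (Fin e) (Fin e) ℂ),
      IsUnitaryIrrep ψ → ∃ ℓ, ∃ T : Matrix (Fin (dim ℓ)) (Fin e) ℂ,
        ∃ T' : Matrix (Fin e) (Fin (dim ℓ)) ℂ,
          T * T' = 1 ∧ T' * T = 1 ∧ ∀ σ, (prir ℓ).rep σ * T = T * ψ σ

attribute [instance] PRIRFamily.instFintype PRIRFamily.instDecEq

/-- The signal states `σ_i` of the MPBT scheme, for a tuple `v` of (distinct) ports: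
the ports are factors `0,…,a+k-1` and `B̃_j` (resp. `C_j`) is factor `a+k+j`. -/
def sigmaOp (d a k : ℕ) (v : Fin k → Fin (a + k)) : Mat d (a + k + k) :=
  ((1 : ℂ) / (d : ℂ) ^ a) •
    ((List.finRange k).map fun j : Fin k =>
      Pplus d (a + k + k) (Fin.castLE (Nat.le_add_right (a + k) k) (v j))
        ⟨a + k + (j : ℕ), by have := j.isLt; omega⟩).prod

/-- The MPBT operator `ρ = Σ_{i ∈ I} σ_i`. -/
def rhoOp (d a k : ℕ) : Mat d (a + k + k) :=
  ∑ v : {v : Fin k → Fin (a + k) // Function.Injective v}, sigmaOp d a k v.1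

/-- `P⁺_{A_i,C}`, tensored with the identity on the remaining ports. -/
def PplusTuple (d a k : ℕ) (v : Fin k → Fin (a + k)) : Mat d (a + k + k) :=
  ((List.finRange k).map fun j : Fin k =>
    Pplus d (a + k + k) (Fin.castLE (Nat.le_add_right (a + k) k) (v j))
      ⟨a + k + (j : ℕ), by have := j.isLt; omega⟩).prod

/-- The increasing enumeration of the ports not appearing in `v`. -/
def compEnum {a k : ℕ} (v : Fin k → Fin (a + k)) (hv : Function.Injective v) :
    Fin a → Fin (a + k) := fun i =>
  (((Finset.image v Finset.univ)ᶜ.orderIsoOfFin (by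
      rw [Finset.card_compl, Finset.card_image_of_injective _ hv, Finset.card_univ,
        Fintype.card_fin, Fintype.card_fin]
      omega)) i).1

/-- Placement of an operator on the tensor factors enumerated by `w`,
tensored with the identity on the remaining factors. -/
def placeOp {d a n : ℕ} (w : Fin a → Fin n) (X : Mat d a) : Mat d n :=
  Matrix.of fun f g =>
    if ∀ i : Fin n, (∀ j, w j ≠ i) → f i = g i
    then X (fun j => f (w j)) (fun j => g (w j)) else 0

/-- `U^{⊗N} ⊗ Ū^{⊗k}`. -/
def Upow (d N k : ℕ) (U : Matrix (Fin d) (Fin d) ℂ) : Mat d (N + k) :=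
  Matrix.of fun f g =>
    ∏ i : Fin (N + k),
      if (i : ℕ) < N then U (f i) (g i) else (starRingEnd ℂ) (U (f i) (g i))

/-- A family of concrete unitary irreps of a subgroup `H ⊆ S(n)`. -/
structure SubIrrepFamily (n : ℕ) (H : Subgroup (Equiv.Perm (Fin n))) where
  Label : Type
  [instFintype : Fintype Label]
  [instDecEq : DecidableEq Label]
  dim : Label → ℕ
  rep : ∀ ℓ, H →* Matrix (Fin (dim ℓ)) (Fin (dim ℓ)) ℂ
  irrep : ∀ ℓ, IsUnitaryIrrep (rep ℓ)

attribute [instance] SubIrrepFamily.instFintype SubIrrepFamily.instDecEq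

/-- An irrep of `S(n)` whose basis is adapted to the subgroup `H` (PRIR form). -/
structure PRIRSubData (n : ℕ) (H : Subgroup (Equiv.Perm (Fin n)))
    (Ψ : SubIrrepFamily n H) (e : ℕ) where
  rep : Equiv.Perm (Fin n) →* Matrix (Fin e) (Fin e) ℂ
  irrep : IsUnitaryIrrep rep
  Path : Type
  [instFintypePath : Fintype Path]
  [instDecEqPath : DecidableEq Path]
  endOf : Path → Ψ.Label
  basis : ((r : Path) × Fin (Ψ.dim (endOf r))) ≃ Fin e
  block_diag : ∀ (h : H) (r : Path) (l l' : Fin (Ψ.dim (endOf r))),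
      rep (h : Equiv.Perm (Fin n)) (basis ⟨r, l⟩) (basis ⟨r, l'⟩) = Ψ.rep (endOf r) h l l'
  block_off : ∀ (h : H) (r r' : Path), r ≠ r' →
      ∀ (l : Fin (Ψ.dim (endOf r))) (l' : Fin (Ψ.dim (endOf r'))),
      rep (h : Equiv.Perm (Fin n)) (basis ⟨r, l⟩) (basis ⟨r', l'⟩) = 0

attribute [instance] PRIRSubData.instFintypePath PRIRSubData.instDecEqPath

/-- A family of pairwise non-isomorphic irreps of `S(n)` in PRIR form relative to `H`. -/
structure PRIRSubFamily (n : ℕ) (H : Subgroup (Equiv.Perm (Fin n)))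
    (Ψ : SubIrrepFamily n H) where
  Label : Type
  [instFintype : Fintype Label]
  [instDecEq : DecidableEq Label]
  dim : Label → ℕ
  prir : ∀ ℓ, PRIRSubData n H Ψ (dim ℓ)
  noniso : ∀ ℓ ℓ', ℓ ≠ ℓ' → ∀ T : Matrix (Fin (dim ℓ)) (Fin (dim ℓ')) ℂ,
      (∀ σ, (prir ℓ).rep σ * T = T * (prir ℓ').rep σ) → T = 0

attribute [instance] PRIRSubFamily.instFintype PRIRSubFamily.instDecEq

end

/-!
Every `τ ∈ S(b+1)` is uniquely `(s n) · h` with `s ≤ n = b+1` and `h ∈ S(b)`. Tracing out the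
last factor turns `V_{(s n) h}` into `V_h` for `s < n` and into `d · V_h` for `s = n`, so
`tr_n E^μ_{pq} = (d_μ/n!) Σ_h [φ^μ(h⁻¹) (d + J_n)]_{qp} V_h`, where `J_n = Σ_{s<n} φ^μ((s n))` is
the Jucys–Murphy element. `J_n` is the sum of all transpositions of `S(n)`, a scalar by Schur's
lemma, minus the sum of the transpositions of `S(b)`, which in the PRIR basis is block diagonal
with scalar blocks by Schur's lemma for each `φ^β`. So `J_n` is diagonal and constant on blocks,
and block diagonality of `φ^μ(h⁻¹)` gives `tr_n E^μ_{(β,i),(β',j)} = δ_{ββ'} K_β E^β_{ij}`.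
Comparing traces, `tr E^μ_{ii} = m_μ` and `tr E^β_{ii} = m_β`, identifies `K_β = m_μ / m_β`.
-/

open Equiv Equiv.Perm

section Vperm

variable {d n : ℕ}

lemma vperm_mul (σ π : Perm (Fin n)) : Vperm d n σ * Vperm d n π = Vperm d n (σ * π) := by
  ext f g
  simp only [Matrix.mul_apply, Vperm, of_apply, ite_mul, one_mul, zero_mul, Finset.sum_ite_eq,
    Finset.mem_univ, if_true, coe_mul, Function.comp_assoc]
  rfl

lemma vperm_one : Vperm d n 1 = 1 := by
  ext f g
  simp [Vperm, Matrix.one_apply]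

lemma vperm_conjTranspose (σ : Perm (Fin n)) : (Vperm d n σ)ᴴ = Vperm d n σ⁻¹ := by
  ext f g
  have hfg : g ∘ σ = f ↔ f ∘ ⇑σ⁻¹ = g := by
    constructor <;> rintro rfl <;> ext x <;> simp
  simp [Vperm, hfg, apply_ite (star : ℂ → ℂ)]

lemma trace_vperm_conj (g τ : Perm (Fin n)) :
    trace (Vperm d n (g * τ * g⁻¹)) = trace (Vperm d n τ) := by
  rw [← vperm_mul, ← vperm_mul, trace_mul_cycle, vperm_mul, inv_mul_cancel, vperm_one, one_mul]

end Vperm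

section Schur

lemma commute_sum_smul_of_conj_invariant {G K R : Type*} [Group G] [Fintype G] [CommSemiring K]
    [Semiring R] [Algebra K R] (φ : G →* R) (a : G → K) (ha : ∀ g τ, a (g * τ * g⁻¹) = a τ)
    (g : G) : (∑ τ, a τ • φ τ) * φ g = φ g * ∑ τ, a τ • φ τ := by
  rw [Finset.sum_mul, Finset.mul_sum]
  refine Fintype.sum_equiv (MulAut.conj g⁻¹).toEquiv _ _ fun τ => ?_
  change a τ • φ τ * φ g = φ g * (a (g⁻¹ * τ * g⁻¹⁻¹) • φ (g⁻¹ * τ * g⁻¹⁻¹))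
  rw [ha, smul_mul_assoc, mul_smul_comm, ← map_mul, ← map_mul, inv_inv]
  simp only [mul_assoc, mul_inv_cancel_left]

variable {d m e : ℕ}

lemma conjTranspose_map_of_unitary {φ : Perm (Fin m) →* Matrix (Fin e) (Fin e) ℂ}
    (hu : ∀ g, (φ g)ᴴ * φ g = 1) (τ : Perm (Fin m)) : (φ τ)ᴴ = φ τ⁻¹ := by
  rw [← mul_one (φ τ)ᴴ, ← map_one φ, ← mul_inv_cancel τ, map_mul, ← Matrix.mul_assoc, hu,
    Matrix.one_mul]

lemma trace_Eop (φ : Perm (Fin m) →* Matrix (Fin e) (Fin e) ℂ) (p q : Fin e) :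
    trace (Eop d m φ p q) = (e / m.factorial : ℂ) * ∑ τ, φ τ q p * trace (Vperm d m τ⁻¹) := by
  rw [Eop, trace_smul, trace_sum, smul_eq_mul, ← Equiv.sum_comp (Equiv.inv _)]
  simp [trace_smul]

lemma star_trace_Eop_self {φ : Perm (Fin m) →* Matrix (Fin e) (Fin e) ℂ}
    (hu : ∀ g, (φ g)ᴴ * φ g = 1) (p : Fin e) :
    star (trace (Eop d m φ p p)) = trace (Eop d m φ p p) := by
  rw [trace_Eop, star_mul', star_sum, ← Equiv.sum_comp (Equiv.inv _)]
  congr 1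
  · simp
  · refine Fintype.sum_congr _ _ fun τ => ?_
    rw [star_mul', ← trace_conjTranspose, vperm_conjTranspose, Equiv.inv_apply, inv_inv,
      ← conjTranspose_apply, conjTranspose_map_of_unitary hu, inv_inv]

lemma IsUnitaryIrrep.trace_Eop_self {φ : Perm (Fin m) →* Matrix (Fin e) (Fin e) ℂ}
    (hφ : IsUnitaryIrrep φ) (p q : Fin e) :
    trace (Eop d m φ p p) = trace (Eop d m φ q q) := by
  -- `tr E_pp` is `e/m!` times the `(p, p)` entry of this central, hence scalar, matrix.
  obtain ⟨w, hw⟩ := hφ.2 (∑ τ, trace (Vperm d m τ⁻¹) • φ τ) fun g =>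
    commute_sum_smul_of_conj_invariant φ _ (fun g τ => by
      rw [_root_.mul_inv_rev, _root_.mul_inv_rev, inv_inv, ← mul_assoc, trace_vperm_conj]) g
  have hent : ∀ p : Fin e, ∑ τ, φ τ p p * trace (Vperm d m τ⁻¹) = w := fun p => by
    simpa [Matrix.sum_apply, mul_comm] using congr_fun (congr_fun hw p) p
  rw [trace_Eop, trace_Eop, hent, hent]

lemma IsUnitaryIrrep.multSW_eq_trace_Eop {φ : Perm (Fin m) →* Matrix (Fin e) (Fin e) ℂ}
    (hφ : IsUnitaryIrrep φ) (p : Fin e) : (multSW d m φ : ℂ) = trace (Eop d m φ p p) := by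
  have hP : trace (Pop d m φ) = e * trace (Eop d m φ p p) := by
    simp [Pop, trace_sum, hφ.trace_Eop_self _ p]
  have hreal : ((trace (Eop d m φ p p)).re : ℂ) = trace (Eop d m φ p p) :=
    Complex.conj_eq_iff_re.mp (star_trace_Eop_self hφ.1 p)
  have he : (e : ℝ) ≠ 0 := Nat.cast_ne_zero.mpr (Fin.pos p).ne'
  rw [multSW, hP, ← hreal]
  simp [he]

end Schur

section PartialTrace

variable {d b : ℕ}

lemma splice_eq_snoc (f : Fin b → Fin d) (t : Fin 1 → Fin d) : splice f t = Fin.snoc f (t 0) := by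
  funext i
  refine Fin.lastCases ?_ (fun j => ?_) i <;> simp [splice]

lemma ptraceLast_one_apply (X : Mat d (b + 1)) (f g : Fin b → Fin d) :
    ptraceLast b 1 X f g = ∑ x : Fin d, X (Fin.snoc f x) (Fin.snoc g x) := by
  simp only [ptraceLast, of_apply, splice_eq_snoc]
  exact (Equiv.funUnique (Fin 1) (Fin d)).sum_comp fun x => X (Fin.snoc f x) (Fin.snoc g x)

lemma trace_ptraceLast (X : Mat d (b + 1)) : trace (ptraceLast b 1 X) = trace X := by
  simp only [trace, diag_apply, ptraceLast_one_apply]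
  rw [← Equiv.sum_comp (Fin.snocEquiv fun _ => Fin d), Fintype.sum_prod_type, Finset.sum_comm]
  rfl

lemma ptraceLast_smul {c : ℕ} (a : ℂ) (X : Mat d (b + c)) :
    ptraceLast b c (a • X) = a • ptraceLast b c X := by
  ext f g
  simp [ptraceLast, Finset.mul_sum]

lemma ptraceLast_sum {c : ℕ} {ι : Type*} [Fintype ι] (X : ι → Mat d (b + c)) :
    ptraceLast b c (∑ i, X i) = ∑ i, ptraceLast b c (X i) := by
  ext f g
  simp only [ptraceLast, of_apply, Matrix.sum_apply]
  exact Finset.sum_comm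

end PartialTrace

section PermExt

variable {m n : ℕ} (hmn : m ≤ n)

lemma permExt_castLE (σ : Perm (Fin m)) (i : Fin m) :
    permExt hmn σ (Fin.castLE hmn i) = Fin.castLE hmn (σ i) :=
  extendDomain_apply_image σ (finLtEquiv hmn) i

lemma permExt_apply_of_le (σ : Perm (Fin m)) {i : Fin n} (hi : m ≤ i) : permExt hmn σ i = i :=
  extendDomain_apply_not_subtype σ (finLtEquiv hmn) (not_lt.2 hi)

lemma permExt_inv (σ : Perm (Fin m)) : (permExt hmn σ)⁻¹ = permExt hmn σ⁻¹ :=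
  extendDomain_inv σ (finLtEquiv hmn)

lemma permExt_injective : Function.Injective (permExt hmn) :=
  extendDomainHom_injective (finLtEquiv hmn)

@[simp]
lemma permExt_one : permExt hmn 1 = 1 :=
  extendDomain_one (finLtEquiv hmn)

lemma isSwap_permExt_iff {σ : Perm (Fin m)} : (permExt hmn σ).IsSwap ↔ σ.IsSwap := by
  rw [← card_support_eq_two, ← card_support_eq_two, permExt, card_support_extend_domain]

end PermExt

section LastLetter

variable {d b : ℕ}

lemma permExt_castSucc (σ : Perm (Fin b)) (i : Fin b) :
    permExt (Nat.le_add_right b 1) σ i.castSucc = (σ i).castSucc :=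
  permExt_castLE _ σ i

lemma permExt_last (σ : Perm (Fin b)) :
    permExt (Nat.le_add_right b 1) σ (Fin.last b) = Fin.last b :=
  permExt_apply_of_le _ σ le_rfl

lemma snoc_comp_permExt (f : Fin b → Fin d) (x : Fin d) (σ : Perm (Fin b)) :
    Fin.snoc f x ∘ permExt (Nat.le_add_right b 1) σ = Fin.snoc (f ∘ σ) x := by
  funext i
  refine Fin.lastCases ?_ (fun j => ?_) i
  · simp [permExt_last]
  · simp [permExt_castSucc]

lemma snoc_comp_swap_last (f : Fin b → Fin d) (x : Fin d) (s : Fin b) :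
    Fin.snoc f x ∘ swap s.castSucc (Fin.last b) = Fin.snoc (Function.update f s x) (f s) := by
  funext i
  refine Fin.lastCases ?_ (fun j => ?_) i
  · simp
  · rcases eq_or_ne j s with rfl | hjs
    · simp
    · rw [Function.comp_apply, swap_apply_of_ne_of_ne (by simpa using hjs)
        (Fin.castSucc_ne_last j)]
      simp [hjs]

lemma ptraceLast_vperm_permExt (σ : Perm (Fin b)) :
    ptraceLast b 1 (Vperm d (b + 1) (permExt (Nat.le_add_right b 1) σ))
      = (d : ℂ) • Vperm d b σ := by
  ext f g
  simp [ptraceLast_one_apply, Vperm, snoc_comp_permExt]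

lemma ptraceLast_vperm_swap_mul_permExt (s : Fin b) (σ : Perm (Fin b)) :
    ptraceLast b 1
        (Vperm d (b + 1) (swap s.castSucc (Fin.last b) * permExt (Nat.le_add_right b 1) σ))
      = Vperm d b σ := by
  ext f g
  simp only [ptraceLast_one_apply, Vperm, of_apply, coe_mul, ← Function.comp_assoc,
    snoc_comp_swap_last, snoc_comp_permExt, Fin.snoc_inj]
  rw [Finset.sum_eq_single (f s)]
  · simp
  · intro x _ hx
    simp [Ne.symm hx]
  · simp

end LastLetter

section Decomposition

variable {b : ℕ}

lemma swap_mul_permExt_last (s : Fin (b + 1)) (σ : Perm (Fin b)) :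
    (swap s (Fin.last b) * permExt (Nat.le_add_right b 1) σ) (Fin.last b) = s := by
  rw [coe_mul, Function.comp_apply, permExt_last, swap_apply_right]

noncomputable def decomposeLast (b : ℕ) : Fin (b + 1) × Perm (Fin b) ≃ Perm (Fin (b + 1)) :=
  Equiv.ofBijective (fun p => swap p.1 (Fin.last b) * permExt (Nat.le_add_right b 1) p.2) <| by
    rw [Fintype.bijective_iff_injective_and_card]
    refine ⟨fun ⟨s, σ⟩ ⟨s', σ'⟩ h => ?_, by simp [Fintype.card_perm, Nat.factorial_succ]⟩
    simp only at h
    obtain rfl : s = s' := by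
      simpa only [swap_mul_permExt_last] using congr($h (Fin.last b))
    exact Prod.ext rfl (permExt_injective _ (mul_left_cancel h))

lemma sum_perm_fin_succ {M : Type*} [AddCommMonoid M] (F : Perm (Fin (b + 1)) → M) :
    ∑ τ, F τ = ∑ σ, F (permExt (Nat.le_add_right b 1) σ)
      + ∑ s : Fin b, ∑ σ, F (swap s.castSucc (Fin.last b) * permExt (Nat.le_add_right b 1) σ) := by
  rw [← Equiv.sum_comp (decomposeLast b), Fintype.sum_prod_type, Fin.sum_univ_castSucc, add_comm]
  simp [decomposeLast, swap_self, ← Equiv.Perm.one_def]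

lemma isSwap_swap_mul_permExt_iff (s : Fin b) (σ : Perm (Fin b)) :
    (swap s.castSucc (Fin.last b) * permExt (Nat.le_add_right b 1) σ).IsSwap ↔ σ = 1 := by
  refine ⟨fun ⟨x, y, hxy, h⟩ => ?_, by rintro rfl; exact ⟨_, _, Fin.castSucc_ne_last s, by simp⟩⟩
  have hlast := swap_mul_permExt_last s.castSucc σ
  have hswap : swap x y = swap s.castSucc (Fin.last b) := by
    rw [h] at hlast
    have hmoved : swap x y (Fin.last b) ≠ Fin.last b := hlast ▸ Fin.castSucc_ne_last s
    rcases (swap_apply_ne_self_iff.mp hmoved).2 with rfl | rfl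
    · rw [swap_apply_left] at hlast
      rw [hlast, Equiv.swap_comm]
    · rw [swap_apply_right] at hlast
      rw [hlast]
  rw [hswap, mul_eq_left] at h
  exact permExt_injective _ (h.trans (permExt_one _).symm)

end Decomposition

section JucysMurphy

variable {b : ℕ} {R : Type*} [Semiring R]

noncomputable def transpositionSum {α : Type*} [Fintype α] [DecidableEq α] (φ : Perm α →* R) : R :=
  ∑ τ with τ.IsSwap, φ τ

noncomputable def jucysMurphy (φ : Perm (Fin (b + 1)) →* R) : R :=
  ∑ s : Fin b, φ (swap s.castSucc (Fin.last b))

lemma transpositionSum_commute {α : Type*} [Fintype α] [DecidableEq α] (φ : Perm α →* R)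
    (g : Perm α) : transpositionSum φ * φ g = φ g * transpositionSum φ := by
  have h : transpositionSum φ = ∑ τ, (if τ.IsSwap then 1 else 0 : ℕ) • φ τ := by
    simp [transpositionSum, Finset.sum_filter]
  rw [h]
  refine commute_sum_smul_of_conj_invariant φ _ (fun g τ => ?_) g
  simp only [← card_support_eq_two, card_support_conj]

lemma transpositionSum_fin_succ (φ : Perm (Fin (b + 1)) →* R) :
    transpositionSum φ
      = ∑ σ with σ.IsSwap, φ (permExt (Nat.le_add_right b 1) σ) + jucysMurphy φ := by
  rw [transpositionSum, Finset.sum_filter, sum_perm_fin_succ, Finset.sum_filter, jucysMurphy]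
  simp only [isSwap_permExt_iff, isSwap_swap_mul_permExt_iff, Finset.sum_ite_eq',
    Finset.mem_univ, if_true, permExt_one, mul_one]

end JucysMurphy

lemma ptraceLast_Eop {d b e : ℕ} (φ : Perm (Fin (b + 1)) →* Matrix (Fin e) (Fin e) ℂ)
    (p q : Fin e) :
    ptraceLast b 1 (Eop d (b + 1) φ p q) = (e / (b + 1).factorial : ℂ) •
      ∑ σ, ((φ (permExt (Nat.le_add_right b 1) σ⁻¹) * ((d : ℂ) • 1 + jucysMurphy φ)) q p)
        • Vperm d b σ := by
  rw [Eop, ptraceLast_smul, ptraceLast_sum]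
  congr 1
  simp only [ptraceLast_smul, sum_perm_fin_succ, ptraceLast_vperm_permExt,
    ptraceLast_vperm_swap_mul_permExt, _root_.mul_inv_rev, swap_inv, map_mul, permExt_inv,
    Matrix.mul_add, Matrix.mul_smul, Matrix.mul_one, jucysMurphy, Matrix.mul_sum,
    Matrix.add_apply, Matrix.smul_apply, Matrix.sum_apply, add_smul, Finset.sum_smul,
    Finset.sum_add_distrib, smul_eq_mul, smul_smul, mul_comm (d : ℂ)]
  rw [Finset.sum_comm]

namespace PRIRData

variable {b e : ℕ} {Φ : IrrepFamily b} (P : PRIRData b 1 Φ e)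

lemma sum_rep_permExt_eq_diagonal (S : Finset (Perm (Fin b))) (c : Φ.Label → ℂ)
    (hc : ∀ α, ∑ σ ∈ S, Φ.rep α σ = c α • 1) :
    ∑ σ ∈ S, P.rep (permExt (Nat.le_add_right b 1) σ)
      = diagonal fun p => c (P.endOf (P.basis.symm p).1) := by
  ext p q
  obtain ⟨⟨r, i⟩, rfl⟩ := P.basis.surjective p
  obtain ⟨⟨r', j⟩, rfl⟩ := P.basis.surjective q
  rw [Matrix.sum_apply, diagonal_apply, P.basis.symm_apply_apply]
  by_cases hr : r = r'
  · subst hr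
    simpa [P.block_diag, Matrix.sum_apply, Matrix.one_apply] using congr($(hc (P.endOf r)) i j)
  · simp [P.block_off _ _ _ hr, hr]

lemma jucysMurphy_eq_diagonal :
    ∃ c : Φ.Label → ℂ, jucysMurphy P.rep = diagonal fun p => c (P.endOf (P.basis.symm p).1) := by
  obtain ⟨z, hz⟩ := P.irrep.2 _ (transpositionSum_commute P.rep)
  choose c hc using fun α => (Φ.irrep α).2 _ (transpositionSum_commute (Φ.rep α))
  refine ⟨fun α => z - c α, ?_⟩
  rw [← diagonal_sub, ← P.sum_rep_permExt_eq_diagonal _ c hc, ← smul_one_eq_diagonal, ← hz,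
    transpositionSum_fin_succ, add_sub_cancel_left]

lemma exists_ptraceLast_Eop_basis (d : ℕ) :
    ∃ K : Φ.Label → ℂ,
      (∀ (r : P.Path) (i j : Fin (Φ.dim (P.endOf r))),
        ptraceLast b 1 (Eop d (b + 1) P.rep (P.basis ⟨r, i⟩) (P.basis ⟨r, j⟩))
          = K (P.endOf r) • Eop d b (Φ.rep (P.endOf r)) i j) ∧
      ∀ (r r' : P.Path), r ≠ r' → ∀ (i : Fin (Φ.dim (P.endOf r))) (j : Fin (Φ.dim (P.endOf r'))),
        ptraceLast b 1 (Eop d (b + 1) P.rep (P.basis ⟨r, i⟩) (P.basis ⟨r', j⟩)) = 0 := by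
  obtain ⟨c, hc⟩ := P.jucysMurphy_eq_diagonal
  refine ⟨fun α => e / (b + 1).factorial * (d + c α) * (b.factorial / Φ.dim α), fun r i j => ?_,
    fun r r' hr i j => ?_⟩ <;>
  simp only [ptraceLast_Eop, hc, smul_one_eq_diagonal, diagonal_add, mul_diagonal,
    P.basis.symm_apply_apply]
  · have hpull : ∀ a : ℂ, ∑ σ, (Φ.rep (P.endOf r) σ⁻¹ j i * a) • Vperm d b σ
        = a • ∑ σ, Φ.rep (P.endOf r) σ⁻¹ j i • Vperm d b σ := fun a => by
      simp only [Finset.smul_sum, smul_smul, mul_comm]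
    rw [Fintype.sum_congr _ _ fun σ => by rw [P.block_diag], hpull, Eop, smul_smul, smul_smul]
    congr 1
    have hdim : (Φ.dim (P.endOf r) : ℂ) ≠ 0 := Nat.cast_ne_zero.mpr (Φ.dim_pos _).ne'
    have hfact : (b.factorial : ℂ) ≠ 0 := Nat.cast_ne_zero.mpr b.factorial_ne_zero
    field_simp
  · simp [P.block_off _ _ _ (Ne.symm hr)]

end PRIRData

lemma eq_multSW_div_of_ptraceLast_Eop {d b e e' : ℕ}
    {φ : Perm (Fin (b + 1)) →* Matrix (Fin e) (Fin e) ℂ}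
    {ψ : Perm (Fin b) →* Matrix (Fin e') (Fin e') ℂ} (hφ : IsUnitaryIrrep φ)
    (hψ : IsUnitaryIrrep ψ) (hm : multSW d (b + 1) φ ≠ 0) {p : Fin e} {i : Fin e'} {K : ℂ}
    (hK : ptraceLast b 1 (Eop d (b + 1) φ p p) = K • Eop d b ψ i i) :
    K = ((multSW d (b + 1) φ / multSW d b ψ : ℝ) : ℂ) := by
  have htr := congrArg trace hK
  rw [trace_ptraceLast, trace_smul, smul_eq_mul, ← hφ.multSW_eq_trace_Eop,
    ← hψ.multSW_eq_trace_Eop] at htr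
  have hψ0 : (multSW d b ψ : ℂ) ≠ 0 := by
    intro h0
    rw [h0, mul_zero] at htr
    exact hm (by exact_mod_cast htr)
  push_cast
  rw [htr, mul_div_cancel_right₀ _ hψ0]

theorem statement_6_general (d b : ℕ)
    (Φ : IrrepFamily b) (e : ℕ) (P : PRIRData b 1 Φ e)
    (hfree : Function.Injective P.endOf)
    (hm : multSW d (b + 1) P.rep ≠ 0)
    (r r' : P.Path) (i : Fin (Φ.dim (P.endOf r))) (j : Fin (Φ.dim (P.endOf r'))) :
    ptraceLast b 1 (Eop d (b + 1) P.rep (P.basis ⟨r, i⟩) (P.basis ⟨r', j⟩))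
      = if h : P.endOf r = P.endOf r' then
          ((multSW d (b + 1) P.rep / multSW d b (Φ.rep (P.endOf r)) : ℝ) : ℂ) •
            Eop d b (Φ.rep (P.endOf r)) i (Fin.cast (congrArg Φ.dim h.symm) j)
        else 0 := by
  obtain ⟨K, hdiag, hoff⟩ := P.exists_ptraceLast_Eop_basis d
  by_cases h : P.endOf r = P.endOf r'
  · obtain rfl := hfree h
    rw [dif_pos h, Fin.cast_eq_self, hdiag,
      eq_multSW_div_of_ptraceLast_Eop P.irrep (Φ.irrep _) hm (hdiag r i i)]
  · rw [dif_neg h, hoff r r' (fun hr => h (congrArg P.endOf hr))]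

/-- For an irrep `φ^μ` of `S(n)` (here `n = b + 1`) with `m_μ ≠ 0`,
in PRIR form relative to `S(n) ⊃ S(n-1)` (multiplicity-free restriction), the
partial trace over the last factor satisfies
`tr_n E^μ_{(β,i_β),(β',j_{β'})} = δ_{ββ'}·(m_μ/m_β)·E^β_{i_β j_β}`. -/
theorem statement_6 (d b : ℕ) (hd : 2 ≤ d) (hb : 1 ≤ b)
    (Φ : IrrepFamily b) (e : ℕ) (P : PRIRData b 1 Φ e)
    (hfree : Function.Injective P.endOf)
    (hm : multSW d (b + 1) P.rep ≠ 0)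
    (r r' : P.Path) (i : Fin (Φ.dim (P.endOf r))) (j : Fin (Φ.dim (P.endOf r'))) :
    ptraceLast b 1 (Eop d (b + 1) P.rep (P.basis ⟨r, i⟩) (P.basis ⟨r', j⟩))
      = if h : P.endOf r = P.endOf r' then
          ((multSW d (b + 1) P.rep / multSW d b (Φ.rep (P.endOf r)) : ℝ) : ℂ) •
            Eop d b (Φ.rep (P.endOf r)) i (Fin.cast (congrArg Φ.dim h.symm) j)
        else 0 :=
  statement_6_general d b Φ e P hfree hm r r' i j
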